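/- arXiv:1810.00032 — 2 statements merged into one kernel-verified Lean document; each statement's English description precedes it below -/
import Mathlib

section
/- Let L be a bounded lattice with a unary operation ' such that x ∨ x' = 1 for all x, x ≤ y implies y' ≤ x' for all x, y, (x')' = x for all x, and x ≤ y implies y = x ∨ (y ∧ x') for all x, y (i.e., L is an orthomodular lattice). Define x ⊙ y := (x ∨ y') ∧ y and x → y := (y ∧ x) ∨ x'. Then (L, ∨, ∧, ⊙, →, 0, 1) is a left residuated l-groupoid satisfying divisibility, antitony, the double negation law and the identity x ⊙ (x ∨ y) = x; that is, for all x, y, z in L: x ⊙ 1 = x, 1 ⊙ x = x, x ⊙ y ≤ z if and only if x ≤ y → z, (x → y) ⊙ x = x ∧ y, x ≤ y implies (y → 0) ≤ (x → 0), ((x → 0) → 0) = x, x ⊙ (x ∨ y) = x, and x → 0 = x'. -/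
/-!
An antitone involution `c` is an order isomorphism onto the order dual, so it obeys the
De Morgan laws, and applying it turns the orthomodular law into its dual form:
`a ≤ y` implies `a ⊙ y = (a ⊔ c y) ⊓ y = a`. Since `x ⊙ y` only depends on `x ⊔ c y`, and
`(y → z) ⊔ c y = (z ⊓ y) ⊔ c y`, this gives `x ⊙ (x ⊔ y) = x`, divisibility and
`(y → z) ⊙ y ≤ z`. The other half of the adjunction, `x ≤ y → (x ⊙ y)`, is the orthomodular
law for `c y ≤ x ⊔ c y`.
-/

section

open Function OrderDual

variable {L : Type*} [Lattice L] {c : L → L}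

def IsOrthomodular (c : L → L) : Prop :=
  ∀ x y : L, x ≤ y → y = x ⊔ (y ⊓ c x)

def sasakiMul (c : L → L) (x y : L) : L := (x ⊔ c y) ⊓ y

def sasakiImp (c : L → L) (x y : L) : L := (y ⊓ x) ⊔ c x

def Antitone.orderIsoDualOfInvolutive (hc : Antitone c) (hcc : Involutive c) : L ≃o Lᵒᵈ where
  toFun x := toDual (c x)
  invFun x := c (ofDual x)
  left_inv := hcc
  right_inv := hcc
  map_rel_iff' {a b} := ⟨fun h => hcc a ▸ hcc b ▸ hc h, fun h => hc h⟩

theorem Antitone.map_sup_of_involutive (hc : Antitone c) (hcc : Involutive c) (u v : L) :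
    c (u ⊔ v) = c u ⊓ c v :=
  (hc.orderIsoDualOfInvolutive hcc).map_sup u v

theorem Antitone.map_inf_of_involutive (hc : Antitone c) (hcc : Involutive c) (u v : L) :
    c (u ⊓ v) = c u ⊔ c v :=
  (hc.orderIsoDualOfInvolutive hcc).map_inf u v

theorem Antitone.map_top_of_involutive [BoundedOrder L] (hc : Antitone c) (hcc : Involutive c) :
    c ⊤ = ⊥ :=
  (hc.orderIsoDualOfInvolutive hcc).map_top

theorem IsOrthomodular.eq_compl_sup_inf (hom : IsOrthomodular c) (hcc : Involutive c) {y z : L}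
    (h : c y ≤ z) : z = c y ⊔ (z ⊓ y) := by
  simpa only [hcc y] using hom (c y) z h

theorem sasakiMul_mono_left (c : L → L) {x x' : L} (h : x ≤ x') (y : L) :
    sasakiMul c x y ≤ sasakiMul c x' y :=
  inf_le_inf_right y (sup_le_sup_right h _)

theorem sasakiMul_sup_compl (c : L → L) (x y : L) : sasakiMul c (x ⊔ c y) y = sasakiMul c x y := by
  rw [sasakiMul, sasakiMul, sup_assoc, sup_idem]

theorem sasakiMul_of_le (hc : Antitone c) (hcc : Involutive c) (hom : IsOrthomodular c)
    {a y : L} (hay : a ≤ y) : sasakiMul c a y = a := by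
  apply hcc.injective
  rw [sasakiMul, hc.map_inf_of_involutive hcc, hc.map_sup_of_involutive hcc, hcc, sup_comm]
  exact (hom.eq_compl_sup_inf hcc (hc hay)).symm

theorem sasakiMul_le_iff_le_sasakiImp (hc : Antitone c) (hcc : Involutive c)
    (hom : IsOrthomodular c) (x y z : L) :
    sasakiMul c x y ≤ z ↔ x ≤ sasakiImp c y z := by
  constructor
  · intro h
    calc x ≤ x ⊔ c y := le_sup_left
      _ = c y ⊔ sasakiMul c x y := hom.eq_compl_sup_inf hcc le_sup_right
      _ ≤ c y ⊔ (z ⊓ y) := sup_le_sup_left (le_inf h inf_le_right) _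
      _ = sasakiImp c y z := sup_comm _ _
  · intro h
    calc sasakiMul c x y ≤ sasakiMul c (sasakiImp c y z) y := sasakiMul_mono_left c h y
      _ = sasakiMul c (z ⊓ y) y := sasakiMul_sup_compl c _ _
      _ = z ⊓ y := sasakiMul_of_le hc hcc hom inf_le_right
      _ ≤ z := inf_le_left

theorem sasakiMul_sasakiImp (hc : Antitone c) (hcc : Involutive c) (hom : IsOrthomodular c)
    (x y : L) : sasakiMul c (sasakiImp c x y) x = x ⊓ y := by
  calc sasakiMul c (sasakiImp c x y) x = sasakiMul c (y ⊓ x) x := sasakiMul_sup_compl c _ _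
    _ = y ⊓ x := sasakiMul_of_le hc hcc hom inf_le_right
    _ = x ⊓ y := inf_comm y x

theorem sasakiMul_top [BoundedOrder L] (hc : Antitone c) (hcc : Involutive c) (x : L) :
    sasakiMul c x ⊤ = x := by
  simp [sasakiMul, hc.map_top_of_involutive hcc]

theorem top_sasakiMul [BoundedOrder L] (c : L → L) (x : L) : sasakiMul c ⊤ x = x := by
  simp [sasakiMul]

theorem sasakiImp_bot [BoundedOrder L] (c : L → L) (x : L) : sasakiImp c x ⊥ = c x := by
  simp [sasakiImp]

end

theorem stmt_11_general {L : Type*} [Lattice L] [BoundedOrder L] (c : L → L)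
    (h2 : ∀ x y : L, x ≤ y → c y ≤ c x)
    (h3 : ∀ x : L, c (c x) = x)
    (h4 : ∀ x y : L, x ≤ y → y = x ⊔ (y ⊓ c x)) :
    ∀ m r : L → L → L, (∀ x y : L, m x y = (x ⊔ c y) ⊓ y) →
      (∀ x y : L, r x y = (y ⊓ x) ⊔ c x) →
      (∀ x : L, m x ⊤ = x) ∧
      (∀ x : L, m ⊤ x = x) ∧
      (∀ x y z : L, m x y ≤ z ↔ x ≤ r y z) ∧
      (∀ x y : L, m (r x y) x = x ⊓ y) ∧
      (∀ x y : L, x ≤ y → r y ⊥ ≤ r x ⊥) ∧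
      (∀ x : L, r (r x ⊥) ⊥ = x) ∧
      (∀ x y : L, m x (x ⊔ y) = x) ∧
      (∀ x : L, r x ⊥ = c x) := by
  intro m r hm hr
  obtain rfl : m = sasakiMul c := funext₂ hm
  obtain rfl : r = sasakiImp c := funext₂ hr
  refine ⟨sasakiMul_top h2 h3, top_sasakiMul c, sasakiMul_le_iff_le_sasakiImp h2 h3 h4,
    sasakiMul_sasakiImp h2 h3 h4, fun x y hxy => ?_, fun x => ?_,
    fun x y => sasakiMul_of_le h2 h3 h4 le_sup_left, sasakiImp_bot c⟩
  · simpa only [sasakiImp_bot] using h2 x y hxy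
  · rw [sasakiImp_bot, sasakiImp_bot, h3]

/-- In an orthomodular lattice with Sasaki operations
`x ⊙ y := (x ⊔ c y) ⊓ y` and `x → y := (y ⊓ x) ⊔ c x`, the structure
`(L, ⊔, ⊓, ⊙, →, ⊥, ⊤)` is a left residuated l-groupoid satisfying
divisibility, antitony, double negation, `x ⊙ (x ⊔ y) = x` and `x → ⊥ = c x`. -/
theorem stmt_11 {L : Type*} [Lattice L] [BoundedOrder L] (c : L → L)
    (h1 : ∀ x : L, x ⊔ c x = ⊤)
    (h2 : ∀ x y : L, x ≤ y → c y ≤ c x)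
    (h3 : ∀ x : L, c (c x) = x)
    (h4 : ∀ x y : L, x ≤ y → y = x ⊔ (y ⊓ c x)) :
    ∀ m r : L → L → L, (∀ x y : L, m x y = (x ⊔ c y) ⊓ y) →
      (∀ x y : L, r x y = (y ⊓ x) ⊔ c x) →
      (∀ x : L, m x ⊤ = x) ∧
      (∀ x : L, m ⊤ x = x) ∧
      (∀ x y z : L, m x y ≤ z ↔ x ≤ r y z) ∧
      (∀ x y : L, m (r x y) x = x ⊓ y) ∧
      (∀ x y : L, x ≤ y → r y ⊥ ≤ r x ⊥) ∧
      (∀ x : L, r (r x ⊥) ⊥ = x) ∧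
      (∀ x y : L, m x (x ⊔ y) = x) ∧
      (∀ x : L, r x ⊥ = c x) :=
  stmt_11_general c h2 h3 h4
end

section
/- Let A be a bounded lattice with binary operations ⊙ and → such that for all x, y, z in A: x ⊙ 1 = x, 1 ⊙ x = x, and x ⊙ y ≤ z if and only if x ≤ y → z (i.e., A is a left residuated l-groupoid). Define x' := x → 0, and assume that for all x, y in A: x ≤ y implies y' ≤ x' (antitony), (x')' = x (double negation law), x ⊙ y = (x ∨ y') ∧ y, and x ⊙ (x ∨ y) = x. Then for all a, b in A with a ≤ b: (b' ⊙ a')' = a ∨ (b ∧ a'). -/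
/-! An antitone involution `x ↦ x'` of a lattice is an order isomorphism onto the dual lattice,
so it satisfies the De Morgan laws. Since `b' ⊙ a' = (b' ⊔ a) ⊓ a'`, negating and applying
De Morgan twice gives `(b' ⊙ a')' = (b ⊓ a') ⊔ a`. -/

section DeMorgan

variable {α : Type*} [Lattice α] {n : α → α}

theorem Antitone.map_inf_of_involutive_s13 (hn : Antitone n) (hinv : Function.Involutive n)
    (x y : α) : n (x ⊓ y) = n x ⊔ n y := by
  refine le_antisymm ?_ (sup_le (hn inf_le_left) (hn inf_le_right))
  have hx : n (n x ⊔ n y) ≤ x := (hn le_sup_left).trans_eq (hinv x)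
  have hy : n (n x ⊔ n y) ≤ y := (hn le_sup_right).trans_eq (hinv y)
  exact (hn (le_inf hx hy)).trans_eq (hinv _)

theorem Antitone.map_sup_of_involutive_s13 (hn : Antitone n) (hinv : Function.Involutive n)
    (x y : α) : n (x ⊔ y) = n x ⊓ n y := by
  rw [← hinv (n x ⊓ n y), hn.map_inf_of_involutive_s13 hinv, hinv x, hinv y]

end DeMorgan

theorem stmt_13_general {A : Type*} [Lattice A] [BoundedOrder A]
    (m r : A → A → A)
    (hant : ∀ x y : A, x ≤ y → r y ⊥ ≤ r x ⊥)
    (hdn : ∀ x : A, r (r x ⊥) ⊥ = x)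
    (hsas : ∀ x y : A, m x y = (x ⊔ r y ⊥) ⊓ y) :
    ∀ a b : A, a ≤ b → r (m (r b ⊥) (r a ⊥)) ⊥ = a ⊔ (b ⊓ r a ⊥) := by
  intro a b _
  have hn : Antitone (r · ⊥) := fun x y => hant x y
  calc r (m (r b ⊥) (r a ⊥)) ⊥
      = r ((r b ⊥ ⊔ a) ⊓ r a ⊥) ⊥ := by rw [hsas, hdn]
    _ = (b ⊓ r a ⊥) ⊔ a := by
      rw [hn.map_inf_of_involutive_s13 hdn, hn.map_sup_of_involutive_s13 hdn, hdn, hdn]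
    _ = a ⊔ (b ⊓ r a ⊥) := sup_comm _ _

/-- In a left residuated l-groupoid (with `m` for `⊙`, `r` for `→`,
and `x' := r x ⊥`) satisfying antitony, double negation, `x ⊙ y = (x ⊔ y') ⊓ y`
and `x ⊙ (x ⊔ y) = x`, for `a ≤ b` we have `(b' ⊙ a')' = a ⊔ (b ⊓ a')`. -/
theorem stmt_13 {A : Type*} [Lattice A] [BoundedOrder A]
    (m r : A → A → A)
    (hu1 : ∀ x : A, m x ⊤ = x)
    (hu2 : ∀ x : A, m ⊤ x = x)
    (hadj : ∀ x y z : A, m x y ≤ z ↔ x ≤ r y z)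
    (hant : ∀ x y : A, x ≤ y → r y ⊥ ≤ r x ⊥)
    (hdn : ∀ x : A, r (r x ⊥) ⊥ = x)
    (hsas : ∀ x y : A, m x y = (x ⊔ r y ⊥) ⊓ y)
    (habs : ∀ x y : A, m x (x ⊔ y) = x) :
    ∀ a b : A, a ≤ b → r (m (r b ⊥) (r a ⊥)) ⊥ = a ⊔ (b ⊓ r a ⊥) :=
  stmt_13_general m r hant hdn hsas
end
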